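/- arXiv:q-alg/9611030 — 2 statements merged into one kernel-verified Lean document; each statement's English description precedes it below -/
import Mathlib

section
/- Let F be a field of characteristic zero, λ ∈ F nonzero, and consider the polynomial ring P = F[y_1, y_2, y_3, …] in countably many variables. Let each operator X_p (p ≥ 1) act on P as λ·∂/∂y_p and each Y_p act as multiplication by y_p. Then P is irreducible under this action: every nonzero F-subspace of P that is stable under all X_p and all Y_p equals P. -/
open MvPolynomial Finsupp

private lemma fock_eq_C_of_totalDegree_eq_zero {F : Type*} [CommSemiring F]
    {f : MvPolynomial ℕ+ F} (h : f.totalDegree = 0) : f = C (coeff 0 f) := by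
  ext d
  rw [coeff_C]
  by_cases hd : d = 0
  · subst hd; simp
  · rw [if_neg (Ne.symm hd)]
    by_contra hc
    have := (MvPolynomial.totalDegree_eq_zero_iff _ f).mp h d (MvPolynomial.mem_support_iff.mpr hc)
    exact hd (Finsupp.ext fun q => this q)

private lemma fock_coeff_pderiv {F : Type*} [CommRing F] (p : ℕ+) (d : ℕ+ →₀ ℕ)
    (f : MvPolynomial ℕ+ F) :
    coeff d (pderiv p f) = (d p + 1) * coeff (d + Finsupp.single p 1) f := by
  induction f using MvPolynomial.induction_on' with
  | monomial s a =>
    rw [pderiv_monomial, coeff_monomial, coeff_monomial]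
    by_cases hs : s p = 0
    · have h1 : s - Finsupp.single p 1 = s := by
        ext q
        by_cases hq : q = p
        · subst hq; simp [hs]
        · simp [Finsupp.single_apply, Ne.symm hq]
      have h2 : d + Finsupp.single p 1 ≠ s := by
        intro h
        have := congrArg (fun g => g p) h
        simp [hs] at this
      rw [h1, if_neg (Ne.symm h2)]
      by_cases hsd : s = d
      · subst hsd; simp [hs]
      · simp [hsd]
    · have hle : Finsupp.single p 1 ≤ s := by
        intro q
        by_cases hq : q = p
        · subst hq; simp; omega
        · simp [Finsupp.single_apply, Ne.symm hq]
      have hiff : s - Finsupp.single p 1 = d ↔ s = d + Finsupp.single p 1 := by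
        constructor
        · intro h; rw [← h, tsub_add_cancel_of_le hle]
        · intro h; rw [h]; simp
      by_cases h : s - Finsupp.single p 1 = d
      · rw [if_pos h, if_pos (hiff.mp h)]
        have : s p = d p + 1 := by
          have := hiff.mp h
          have := congrArg (fun g => g p) this
          simp at this
          omega
        rw [this]; push_cast; ring
      · rw [if_neg h, if_neg (fun hh => h (hiff.mpr hh)), mul_zero]
  | add f g hf hg =>
    simp [hf, hg]; ring

/-- Irreducibility of the Fock representation of the infinite Heisenberg algebra:
every nonzero subspace of `F[y₁, y₂, …]` stable under all `λ·∂/∂y_p` and all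
multiplications by `y_p` is the whole space. -/
theorem fock_module_irreducible {F : Type*} [Field F] [CharZero F]
    (lam : F) (hlam : lam ≠ 0)
    (V : Submodule F (MvPolynomial ℕ+ F)) (hV : V ≠ ⊥)
    (hX : ∀ (p : ℕ+) (f : MvPolynomial ℕ+ F), f ∈ V → lam • MvPolynomial.pderiv p f ∈ V)
    (hY : ∀ (p : ℕ+) (f : MvPolynomial ℕ+ F), f ∈ V → MvPolynomial.X p * f ∈ V) :
    V = ⊤ := by
  -- V is closed under pderiv
  have hD : ∀ (p : ℕ+) (f : MvPolynomial ℕ+ F), f ∈ V → pderiv p f ∈ V := by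
    intro p f hf
    have := V.smul_mem lam⁻¹ (hX p f hf)
    rwa [smul_smul, inv_mul_cancel₀ hlam, one_smul] at this
  -- 1 ∈ V
  have h1 : (1 : MvPolynomial ℕ+ F) ∈ V := by
    obtain ⟨f, hfV, hf0⟩ := Submodule.exists_mem_ne_zero_of_ne_bot hV
    have key : ∀ n : ℕ, ∀ f : MvPolynomial ℕ+ F, f ∈ V → f ≠ 0 →
        f.totalDegree ≤ n → (1 : MvPolynomial ℕ+ F) ∈ V := by
      intro n
      induction n with
      | zero =>
        intro f hfV hf0 hdeg
        have hd0 : f.totalDegree = 0 := Nat.le_zero.mp hdeg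
        have hfC : f = MvPolynomial.C (MvPolynomial.coeff 0 f) :=
          fock_eq_C_of_totalDegree_eq_zero hd0
        have hc : MvPolynomial.coeff 0 f ≠ 0 := fun h => hf0 (by rw [hfC, h, map_zero])
        have key1 : MvPolynomial.C (MvPolynomial.coeff 0 f) ∈ V := hfC ▸ hfV
        have heq : (1 : MvPolynomial ℕ+ F)
            = (MvPolynomial.coeff 0 f)⁻¹ • MvPolynomial.C (MvPolynomial.coeff 0 f) := by
          rw [MvPolynomial.smul_eq_C_mul, ← MvPolynomial.C_mul, inv_mul_cancel₀ hc,
            MvPolynomial.C_1]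
        rw [heq]
        exact V.smul_mem _ key1
      | succ n ih =>
        intro f hfV hf0 hdeg
        by_cases hd0 : f.totalDegree = 0
        · have hfC : f = MvPolynomial.C (MvPolynomial.coeff 0 f) :=
            fock_eq_C_of_totalDegree_eq_zero hd0
          have hc : MvPolynomial.coeff 0 f ≠ 0 := fun h => hf0 (by rw [hfC, h, map_zero])
          have key1 : MvPolynomial.C (MvPolynomial.coeff 0 f) ∈ V := hfC ▸ hfV
          have heq : (1 : MvPolynomial ℕ+ F)
              = (MvPolynomial.coeff 0 f)⁻¹ • MvPolynomial.C (MvPolynomial.coeff 0 f) := by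
            rw [MvPolynomial.smul_eq_C_mul, ← MvPolynomial.C_mul, inv_mul_cancel₀ hc,
              MvPolynomial.C_1]
          rw [heq]
          exact V.smul_mem _ key1
        · -- find a variable occurring in f
          obtain ⟨d, hd⟩ := Finset.exists_mem_eq_sup f.support
            (MvPolynomial.support_nonempty.mpr hf0) (fun s => s.sum fun _ e => e)
          have hdsum : d.sum (fun _ e => e) = f.totalDegree := hd.2.symm
          have hdpos : d.sum (fun _ e => e) ≠ 0 := by rw [hdsum]; exact hd0
          obtain ⟨p, hp⟩ : ∃ p, d p ≠ 0 := by
            by_contra h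
            push_neg at h
            have : d = 0 := Finsupp.ext fun q => h q
            rw [this] at hdpos
            exact hdpos (Finsupp.sum_zero_index)
          set g := pderiv p f with hg
          have hrec : (d - Finsupp.single p 1) + Finsupp.single p 1 = d := by
            ext q
            by_cases hq : q = p
            · subst hq; simp; omega
            · simp [Finsupp.single_apply, Ne.symm hq]
          have hcoeff : coeff (d - Finsupp.single p 1) g = (d p : F) * coeff d f := by
            rw [hg, fock_coeff_pderiv, hrec]
            congr 1
            simp only [Finsupp.coe_tsub, Pi.sub_apply, Finsupp.single_eq_same]
            rw [Nat.cast_sub (Nat.one_le_iff_ne_zero.mpr hp), Nat.cast_one]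
            ring
          have hg0 : g ≠ 0 := by
            intro h
            rw [h, coeff_zero] at hcoeff
            have hcd : coeff d f ≠ 0 := MvPolynomial.mem_support_iff.mp hd.1
            have : (d p : F) ≠ 0 := Nat.cast_ne_zero.mpr hp
            exact (mul_ne_zero this hcd) hcoeff.symm
          have hgdeg : g.totalDegree ≤ n := by
            rw [MvPolynomial.totalDegree]
            apply Finset.sup_le
            intro m hm
            have hc : coeff (m + Finsupp.single p 1) f ≠ 0 := by
              intro h
              have := MvPolynomial.mem_support_iff.mp hm
              rw [hg, fock_coeff_pderiv, h, mul_zero] at this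
              exact this rfl
            have hle : (m + Finsupp.single p 1).sum (fun _ e => e) ≤ f.totalDegree :=
              MvPolynomial.le_totalDegree (MvPolynomial.mem_support_iff.mpr hc)
            have hms : (m + Finsupp.single p 1).sum (fun _ e => e)
                = m.sum (fun _ e => e) + 1 := by
              rw [Finsupp.sum_add_index (fun _ _ => rfl) (fun _ _ _ _ => rfl)]
              simp
            omega
          exact ih g (hD p f hfV) hg0 hgdeg
    exact key f.totalDegree f hfV hf0 le_rfl
  -- V contains X p ^ n * f for f ∈ V
  have hpow : ∀ (p : ℕ+) (n : ℕ) (f : MvPolynomial ℕ+ F), f ∈ V →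
      MvPolynomial.X p ^ n * f ∈ V := by
    intro p n f hf
    induction n with
    | zero => simpa using hf
    | succ n ih =>
      have := hY p _ ih
      rwa [mul_comm (MvPolynomial.X p), mul_assoc, mul_comm f, ← mul_assoc, ← pow_succ] at this
  -- all monomials with coeff 1 are in V
  have hmono : ∀ d : ℕ+ →₀ ℕ, MvPolynomial.monomial d (1 : F) ∈ V := by
    intro d
    induction d using Finsupp.induction with
    | zero => simpa using h1
    | single_add a b d ha hb ih =>
      have := hpow a b _ ih
      rwa [MvPolynomial.X_pow_eq_monomial, MvPolynomial.monomial_mul, one_mul] at this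
  -- conclude
  rw [eq_top_iff]
  intro f _
  induction f using MvPolynomial.induction_on' with
  | monomial d a =>
    have := V.smul_mem a (hmono d)
    rwa [MvPolynomial.smul_monomial, smul_eq_mul, mul_one] at this
  | add f g hf hg => exact V.add_mem (hf trivial) (hg trivial)
end

section
/- Let n ≥ 1 and let a = (a_{ij})_{1≤i,j≤n} be the Cartan matrix of type A_n (a_{ii} = 2, a_{ij} = −1 if |i−j| = 1, a_{ij} = 0 otherwise). For every nonzero integer l, the n×n matrix over ℚ(q) with entries [l·a_{ij}] is invertible; its determinant equals [l]^n · (t^{n+1} − t^{−(n+1)})/(t − t^{−1}) where t = q^l, which is nonzero in ℚ(q). -/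
/-- The base field `ℚ(q)`. -/
abbrev Kq : Type := RatFunc ℚ

/-- The variable `q` of `ℚ(q)`. -/
noncomputable def qvar : Kq := RatFunc.X

/-- The quantum integer `[n] = (q^n − q^{−n})/(q − q^{−1})` in `ℚ(q)`. -/
noncomputable def qint (n : ℤ) : Kq := (qvar ^ n - qvar ^ (-n)) / (qvar - qvar⁻¹)

lemma qvar_ne_zero : qvar ≠ 0 := RatFunc.X_ne_zero

lemma qvar_pow_ne_one {m : ℕ} (hm : m ≠ 0) : (qvar : Kq) ^ m ≠ 1 := by
  intro h
  have h2 : (algebraMap (Polynomial ℚ) Kq) (Polynomial.X ^ m) = algebraMap (Polynomial ℚ) Kq 1 := by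
    rw [map_pow, RatFunc.algebraMap_X, map_one]
    exact h
  have h3 : (Polynomial.X : Polynomial ℚ) ^ m = 1 := RatFunc.algebraMap_injective ℚ h2
  have := congrArg Polynomial.natDegree h3
  simp at this
  exact hm this

lemma qvar_zpow_ne_one {m : ℤ} (hm : m ≠ 0) : (qvar : Kq) ^ m ≠ 1 := by
  rcases lt_or_gt_of_ne hm with h | h
  · intro he
    have : (qvar : Kq) ^ (-m) = 1 := by
      rw [zpow_neg, he, inv_one]
    rw [show (-m) = ((-m).toNat : ℤ) by omega, zpow_natCast] at this
    exact qvar_pow_ne_one (by omega) this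
  · intro he
    rw [show m = (m.toNat : ℤ) by omega, zpow_natCast] at he
    exact qvar_pow_ne_one (by omega) he

lemma hne {m : ℤ} (hm : m ≠ 0) : (qvar : Kq) ^ m - qvar ^ (-m) ≠ 0 := by
  intro h
  have h1 : (qvar : Kq) ^ m = qvar ^ (-m) := by linear_combination h
  have h2 : (qvar : Kq) ^ (2 * m) = 1 := by
    rw [two_mul, zpow_add₀ qvar_ne_zero]
    nth_rewrite 1 [h1]
    rw [← zpow_add₀ qvar_ne_zero, neg_add_cancel, zpow_zero]
  exact qvar_zpow_ne_one (by omega) h2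

lemma qden_ne : (qvar : Kq) - qvar⁻¹ ≠ 0 := by
  have := hne (m := 1) one_ne_zero
  rw [zpow_one, zpow_neg, zpow_one] at this
  exact this

lemma qint_ne_zero {m : ℤ} (hm : m ≠ 0) : qint m ≠ 0 :=
  div_ne_zero (hne hm) qden_ne

noncomputable def triMat (d : Kq) (n : ℕ) : Matrix (Fin n) (Fin n) Kq :=
  Matrix.of fun i j => if (i : ℕ) = (j : ℕ) then d
    else if (i : ℕ) = (j : ℕ) + 1 ∨ (j : ℕ) = (i : ℕ) + 1 then -1 else 0

lemma triDet_rec (d : Kq) (n : ℕ) :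
    (triMat d (n + 2)).det = d * (triMat d (n + 1)).det - (triMat d n).det := by
  rw [Matrix.det_succ_row_zero, Fin.sum_univ_succ, Fin.sum_univ_succ]
  have hzero : ∀ j : Fin n, (triMat d (n + 2)) 0 j.succ.succ = 0 := by
    intro j
    simp only [triMat, Matrix.of_apply, Fin.val_succ, Fin.val_zero]
    simp
  simp only [hzero, mul_zero, zero_mul, Finset.sum_const_zero, add_zero]
  have h00 : (triMat d (n + 2)) 0 0 = d := by simp [triMat]
  have h01 : (triMat d (n + 2)) 0 (0 : Fin (n+1)).succ = -1 := by
    simp only [triMat, Matrix.of_apply, Fin.val_succ, Fin.val_zero]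
    rw [if_neg (by omega), if_pos (by norm_num)]
  have hsub0 : (triMat d (n + 2)).submatrix Fin.succ (Fin.succAbove 0) = triMat d (n + 1) := by
    ext i j
    simp only [Matrix.submatrix_apply, Fin.succAbove_zero, triMat, Matrix.of_apply, Fin.val_succ]
    split_ifs <;> first | rfl | (exfalso; omega)
  set N := (triMat d (n + 2)).submatrix Fin.succ (Fin.succAbove (0 : Fin (n+1)).succ) with hN
  have hA0 : ((((0:Fin (n + 1)).succ).succAbove (0 : Fin (n + 1))) : ℕ) = 0 := by
    rw [Fin.succAbove, if_pos]
    · rfl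
    · rw [Fin.lt_def]; simp
  have hA1 : ∀ j : Fin n, ((((0:Fin (n + 1)).succ).succAbove j.succ) : ℕ) = (j : ℕ) + 2 := by
    intro j
    rw [Fin.succAbove, if_neg]
    · simp [Fin.val_succ]
    · rw [Fin.lt_def]; simp
  have hN00 : N 0 0 = -1 := by
    simp only [hN, Matrix.submatrix_apply, triMat, Matrix.of_apply, hA0, Fin.val_succ, Fin.val_zero]
    rw [if_neg (by omega), if_pos (by norm_num)]
  have hNi0 : ∀ i : Fin n, N i.succ 0 = 0 := by
    intro i
    simp only [hN, Matrix.submatrix_apply, triMat, Matrix.of_apply, hA0, Fin.val_succ]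
    rw [if_neg (by omega), if_neg (by omega)]
  have hsub1 : N.submatrix (Fin.succAbove 0) Fin.succ = triMat d n := by
    ext i j
    simp only [hN, Matrix.submatrix_apply, Fin.succAbove_zero, triMat, Matrix.of_apply,
      hA1, Fin.val_succ]
    split_ifs <;> first | rfl | (exfalso; omega)
  have hdetN : N.det = -(triMat d n).det := by
    rw [Matrix.det_succ_column_zero, Fin.sum_univ_succ]
    simp only [hNi0, mul_zero, zero_mul, Finset.sum_const_zero, add_zero, hN00, hsub1,
      Fin.val_zero, pow_zero]
    ring
  rw [h00, h01, hsub0, hdetN]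
  simp only [Fin.val_zero, pow_zero, Fin.val_succ, pow_one]
  ring

lemma tri_step (t u : Kq) (ht : t ≠ 0) (hu0 : u ≠ 0) :
    (t + t⁻¹) * (u * t ^ 2 - (u * t ^ 2)⁻¹) - (u * t ^ 1 - (u * t ^ 1)⁻¹)
      = u * t ^ 3 - (u * t ^ 3)⁻¹ := by
  field_simp
  ring

lemma triDet_closed (t : Kq) (ht : t ≠ 0) (hD : t - t⁻¹ ≠ 0) (n : ℕ) :
    (triMat (t + t⁻¹) n).det = (t ^ ((n : ℤ) + 1) - t ^ (-((n : ℤ) + 1))) / (t - t⁻¹) := by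
  have key : ∀ m : ℕ, t ^ ((m : ℤ) + 1) - t ^ (-((m : ℤ) + 1))
      = t ^ (m + 1) - (t ^ (m + 1))⁻¹ := by
    intro m
    rw [show (m : ℤ) + 1 = ((m + 1 : ℕ) : ℤ) by push_cast; ring, zpow_neg, zpow_natCast]
  have hD2 : t ^ 2 - 1 ≠ 0 := by
    intro h
    apply hD
    have : t - t⁻¹ = (t ^ 2 - 1) * t⁻¹ := by field_simp
    rw [this, h, zero_mul]
  induction n using Nat.twoStepInduction with
  | zero =>
    rw [key 0, Matrix.det_fin_zero]
    simp only [zero_add, pow_one]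
    rw [div_self hD]
  | one =>
    rw [key 1, Matrix.det_fin_one]
    have : triMat (t + t⁻¹) 1 0 0 = t + t⁻¹ := by simp [triMat]
    rw [this, eq_div_iff hD]
    field_simp
    ring
  | more m ih1 ih2 =>
    rw [triDet_rec, ih1, ih2, key m, key (m + 1), key (m + 2)]
    have h1 : ∀ k : ℕ, t ^ k ≠ 0 := fun k => pow_ne_zero _ ht
    have hu0 : t ^ m ≠ 0 := pow_ne_zero _ ht
    have e : ∀ k : ℕ, t ^ (m + k) = t ^ m * t ^ k := fun k => pow_add t m k
    rw [← mul_div_assoc, div_sub_div_same,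
      show m + 1 + 1 = m + 2 from rfl, show m + 2 + 1 = m + 3 from rfl, e 1, e 2, e 3,
      tri_step t (t ^ m) ht hu0]

lemma qint_two_mul (l : ℤ) : qint (l * 2) = qint l * (qvar ^ l + (qvar ^ l)⁻¹) := by
  have ht : (qvar : Kq) ^ l ≠ 0 := zpow_ne_zero _ qvar_ne_zero
  rw [qint, qint, div_mul_eq_mul_div]
  congr 1
  have h1 : (qvar : Kq) ^ (l * 2) = (qvar ^ l) ^ 2 := by
    rw [zpow_mul]; norm_cast
  have h2 : (qvar : Kq) ^ (-(l * 2)) = ((qvar ^ l) ^ 2)⁻¹ := by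
    rw [zpow_neg, h1]
  have h3 : (qvar : Kq) ^ (-l) = (qvar ^ l)⁻¹ := by rw [zpow_neg]
  rw [h1, h2, h3]
  field_simp
  ring

lemma qint_neg (l : ℤ) : qint (l * -1) = qint l * (-1) := by
  rw [mul_neg_one, qint, qint, neg_neg]
  ring


set_option synthInstance.maxHeartbeats 1000000 in
/-- For the Cartan matrix `a` of type `Aₙ` (`n ≥ 1`) and any `l ≠ 0`, the matrix
`([l a_{ij}])` over `ℚ(q)` has determinant
`[l]^n (t^{n+1} − t^{−(n+1)})/(t − t^{−1})` with `t = q^l`, and is invertible. -/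
theorem quantum_cartan_matrix_det (n : ℕ) (hn : 1 ≤ n) (l : ℤ) (hl : l ≠ 0)
    (a : Fin n → Fin n → ℤ)
    (ha : ∀ i j, a i j =
      if i = j then 2 else if (i : ℤ) - (j : ℤ) = 1 ∨ (j : ℤ) - (i : ℤ) = 1 then -1 else 0)
    (A : Matrix (Fin n) (Fin n) Kq) (hA : A = Matrix.of fun i j => qint (l * a i j)) :
    A.det = qint l ^ n *
        ((qvar ^ l) ^ ((n : ℤ) + 1) - (qvar ^ l) ^ (-((n : ℤ) + 1))) /
          (qvar ^ l - (qvar ^ l)⁻¹) ∧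
      IsUnit A.det := by
  have ht : (qvar : Kq) ^ l ≠ 0 := zpow_ne_zero _ qvar_ne_zero
  have hD : (qvar : Kq) ^ l - (qvar ^ l)⁻¹ ≠ 0 := by
    rw [← zpow_neg]; exact hne hl
  have hM : A = qint l • triMat (qvar ^ l + (qvar ^ l)⁻¹) n := by
    rw [hA]
    ext i j
    rw [Matrix.of_apply, ha i j, Matrix.smul_apply, smul_eq_mul, triMat, Matrix.of_apply]
    have hvi : ((i : ℕ) : ℤ) = (i : ℤ) := rfl
    have hvj : ((j : ℕ) : ℤ) = (j : ℤ) := rfl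
    by_cases h1 : i = j
    · rw [if_pos h1, if_pos (by rw [h1]), qint_two_mul]
    · rw [if_neg h1, if_neg (fun h => h1 (Fin.ext h))]
      by_cases h2 : (i : ℤ) - (j : ℤ) = 1 ∨ (j : ℤ) - (i : ℤ) = 1
      · rw [if_pos h2, if_pos (by omega), qint_neg]
      · rw [if_neg h2, if_neg (by omega), mul_zero]
        simp [qint]
  have hdet : A.det = qint l ^ n *
      ((qvar ^ l) ^ ((n : ℤ) + 1) - (qvar ^ l) ^ (-((n : ℤ) + 1))) /
        (qvar ^ l - (qvar ^ l)⁻¹) := by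
    rw [hM, Matrix.det_smul, Fintype.card_fin, triDet_closed _ ht hD n, mul_div_assoc]
  refine ⟨hdet, ?_⟩
  rw [hdet, isUnit_iff_ne_zero]
  have hnum : ((qvar : Kq) ^ l) ^ ((n : ℤ) + 1) - (qvar ^ l) ^ (-((n : ℤ) + 1)) ≠ 0 := by
    rw [← zpow_mul, ← zpow_mul, mul_neg]
    exact hne (mul_ne_zero hl (by omega))
  exact div_ne_zero (mul_ne_zero (pow_ne_zero _ (qint_ne_zero hl)) hnum) hD
end
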